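/- arXiv:1612.06032 — 7 statements merged into one kernel-verified Lean document; each statement's English description precedes it below -/
import Mathlib

section
/- Let X be a Q-cotopological space with closure operator A ↦ Ā (the meet of all closed sets above A). Then the following are equivalent: (1) X is stratified (p → A is closed whenever A is closed, for all p ∈ Q); (2) p & Ā ≤ (p & A)‾ for all p ∈ Q and A ∈ Q^X; (3) the closure operator is Q-order-preserving with respect to the fuzzy inclusion order, i.e., sub_X(A,B) ≤ sub_X(Ā, B̄) for all A, B ∈ Q^X. -/
/-- A commutative and integral quantale: a complete lattice with a commutative
monoid operation `mul` whose unit is the top element, distributing over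
arbitrary joins, together with its residuation `imp` characterized by the
adjoint property. -/
structure CIQuantale (Q : Type*) [CompleteLattice Q] where
  mul : Q → Q → Q
  mul_comm : ∀ p q : Q, mul p q = mul q p
  mul_assoc : ∀ p q r : Q, mul (mul p q) r = mul p (mul q r)
  mul_top : ∀ p : Q, mul p ⊤ = p
  mul_sSup : ∀ (p : Q) (S : Set Q), mul p (sSup S) = ⨆ q ∈ S, mul p q
  imp : Q → Q → Q
  adj : ∀ p q r : Q, mul p q ≤ r ↔ q ≤ imp p r

namespace CIQuantale

variable {Q : Type*} [CompleteLattice Q] (𝒬 : CIQuantale Q) {X : Type*}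

/-- The fuzzy inclusion order on `Q`-valued fuzzy sets. -/
def sub (A B : X → Q) : Q := ⨅ x, 𝒬.imp (A x) (B x)

/-- A `Q`-cotopology: contains all constants, closed under binary joins
and arbitrary meets. -/
def IsCotop (τ : Set (X → Q)) : Prop :=
  (∀ p : Q, (fun _ => p) ∈ τ) ∧
  (∀ A B : X → Q, A ∈ τ → B ∈ τ → A ⊔ B ∈ τ) ∧
  (∀ S : Set (X → Q), S ⊆ τ → sInf S ∈ τ)

/-- Stratified: `p → A` is closed whenever `A` is closed. -/
def IsStratified (τ : Set (X → Q)) : Prop :=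
  ∀ (p : Q) (A : X → Q), A ∈ τ → (fun x => 𝒬.imp p (A x)) ∈ τ

/-- Closure: the meet of all closed sets above `A`. -/
def cl (τ : Set (X → Q)) (A : X → Q) : X → Q :=
  sInf {B | B ∈ τ ∧ A ≤ B}

/-- Irreducible closed set. -/
def Irred (τ : Set (X → Q)) (F : X → Q) : Prop :=
  F ∈ τ ∧ (⨆ x, F x) = ⊤ ∧
  ∀ A B : X → Q, A ∈ τ → B ∈ τ →
    𝒬.sub F (A ⊔ B) = 𝒬.sub F A ⊔ 𝒬.sub F B

/-- The fuzzy singleton `1ₓ`. -/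
def pt [DecidableEq X] (x : X) : X → Q := fun y => if y = x then (⊤ : Q) else ⊥

/-- The specialization `Q`-order of a `Q`-cotopological space. -/
def specOrd (τ : Set (X → Q)) (x y : X) : Q := ⨅ A ∈ τ, 𝒬.imp (A y) (A x)

/-- Fuzzy lower set with respect to a `Q`-order `R`. -/
def FuzzyLower (R : X → X → Q) (φ : X → Q) : Prop :=
  ∀ x y : X, 𝒬.mul (φ y) (R x y) ≤ φ x

/-- Irreducible fuzzy lower set. -/
def IrredLower (R : X → X → Q) (φ : X → Q) : Prop :=
  (⨆ x, φ x) = ⊤ ∧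
  ∀ φ₁ φ₂ : X → Q, 𝒬.FuzzyLower R φ₁ → 𝒬.FuzzyLower R φ₂ →
    𝒬.sub φ (φ₁ ⊔ φ₂) = 𝒬.sub φ φ₁ ⊔ 𝒬.sub φ φ₂

/-- Pointwise negations of members of `τ`. -/
def negSet (τ : Set (X → Q)) : Set (X → Q) :=
  {U | ∃ A ∈ τ, U = fun x => 𝒬.imp (A x) ⊥}

end CIQuantale

open CIQuantale

section Aux
variable {Q : Type*} [CompleteLattice Q] (𝒬 : CIQuantale Q) {X : Type*}

private lemma le_cl' (τ : Set (X → Q)) (A : X → Q) : A ≤ cl τ A :=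
  le_sInf fun _ hB => hB.2

private lemma cl_mem' (τ : Set (X → Q)) (hτ : IsCotop τ) (A : X → Q) :
    cl τ A ∈ τ := hτ.2.2 _ fun _ hB => hB.1

private lemma cl_le' (τ : Set (X → Q)) {A B : X → Q} (h1 : B ∈ τ) (h2 : A ≤ B) :
    cl τ A ≤ B := sInf_le ⟨h1, h2⟩

private lemma le_sub_iff' (A B : X → Q) (p : Q) :
    p ≤ 𝒬.sub A B ↔ ∀ x, 𝒬.mul (A x) p ≤ B x := by
  simp only [CIQuantale.sub, le_iInf_iff]
  exact forall_congr' fun x => (𝒬.adj (A x) p (B x)).symm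

end Aux

theorem stmt7 {Q : Type*} [CompleteLattice Q] (𝒬 : CIQuantale Q) {X : Type*}
    (τ : Set (X → Q)) (hτ : IsCotop τ) :
    (𝒬.IsStratified τ ↔
      ∀ (p : Q) (A : X → Q),
        (fun x => 𝒬.mul p (cl τ A x)) ≤ cl τ (fun x => 𝒬.mul p (A x))) ∧
    (𝒬.IsStratified τ ↔
      ∀ A B : X → Q, 𝒬.sub A B ≤ 𝒬.sub (cl τ A) (cl τ B)) := by
  have h12 : 𝒬.IsStratified τ ↔
      ∀ (p : Q) (A : X → Q),
        (fun x => 𝒬.mul p (cl τ A x)) ≤ cl τ (fun x => 𝒬.mul p (A x)) := by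
    constructor
    · intro hs p A x
      have hC : (fun y => 𝒬.imp p (cl τ (fun z => 𝒬.mul p (A z)) y)) ∈ τ :=
        hs p _ (cl_mem' τ hτ _)
      have hA : A ≤ fun y => 𝒬.imp p (cl τ (fun z => 𝒬.mul p (A z)) y) := fun y =>
        (𝒬.adj p (A y) _).mp (le_cl' τ (fun z => 𝒬.mul p (A z)) y)
      exact (𝒬.adj p (cl τ A x) _).mpr (cl_le' τ hC hA x)
    · intro h p A hA
      set F : X → Q := fun x => 𝒬.imp p (A x) with hF
      have hpF : (fun x => 𝒬.mul p (F x)) ≤ A := fun x =>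
        (𝒬.adj p (F x) (A x)).mpr le_rfl
      have h1 : (fun x => 𝒬.mul p (cl τ F x)) ≤ A :=
        (h p F).trans (cl_le' τ hA hpF)
      have h2 : cl τ F ≤ F := fun x => (𝒬.adj p (cl τ F x) (A x)).mp (h1 x)
      have hFeq : cl τ F = F := le_antisymm h2 (le_cl' τ F)
      rw [← hFeq]; exact cl_mem' τ hτ F
  have h23 : (∀ (p : Q) (A : X → Q),
        (fun x => 𝒬.mul p (cl τ A x)) ≤ cl τ (fun x => 𝒬.mul p (A x))) ↔
      ∀ A B : X → Q, 𝒬.sub A B ≤ 𝒬.sub (cl τ A) (cl τ B) := by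
    constructor
    · intro h A B
      rw [le_sub_iff']
      intro x
      set s := 𝒬.sub A B with hs
      have hsAB : ∀ y, 𝒬.mul (A y) s ≤ B y := (le_sub_iff' 𝒬 A B s).mp le_rfl
      have hsA : (fun y => 𝒬.mul s (A y)) ≤ B := fun y =>
        le_of_eq_of_le (𝒬.mul_comm s (A y)) (hsAB y)
      have hfin : (fun y => 𝒬.mul s (cl τ A y)) ≤ cl τ B :=
        (h s A).trans (cl_le' τ (cl_mem' τ hτ B) (hsA.trans (le_cl' τ B)))
      rw [𝒬.mul_comm]; exact hfin x
    · intro h p A x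
      have hp : p ≤ 𝒬.sub A (fun y => 𝒬.mul p (A y)) :=
        (le_sub_iff' 𝒬 A _ p).mpr fun y => le_of_eq (𝒬.mul_comm (A y) p)
      have h2 := (le_sub_iff' 𝒬 _ _ p).mp (hp.trans (h A _)) x
      exact le_of_eq_of_le (𝒬.mul_comm p (cl τ A x)) h2
  exact ⟨h12, h12.trans h23⟩
end

section
/- In a stratified Q-cotopological space X, the closure of any A ∈ Q^X is given by Ā = ⋀ { sub_X(A,B) → B : B closed in X }. -/
open CIQuantale

theorem stmt9 {Q : Type*} [CompleteLattice Q] (𝒬 : CIQuantale Q) {X : Type*}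
    (τ : Set (X → Q)) (hτ : IsCotop τ) (hs : 𝒬.IsStratified τ) (A : X → Q) :
    cl τ A = ⨅ B ∈ τ, (fun x => 𝒬.imp (𝒬.sub A B) (B x)) := by
  apply le_antisymm
  · refine le_iInf fun B => le_iInf fun hB => sInf_le ⟨hs _ B hB, ?_⟩
    intro x
    refine (𝒬.adj _ _ _).mp ?_
    rw [𝒬.mul_comm]
    exact (𝒬.adj _ _ _).mpr (iInf_le _ x)
  · refine le_sInf fun B hB => ?_
    obtain ⟨hBτ, hAB⟩ := hB
    have hsub : 𝒬.sub A B = ⊤ := by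
      refine le_antisymm le_top (le_iInf fun x => (𝒬.adj _ _ _).mp ?_)
      rw [𝒬.mul_top]
      exact hAB x
    refine le_trans (iInf₂_le B hBτ) ?_
    intro x
    simp only [hsub]
    have := (𝒬.adj (⊤ : Q) (𝒬.imp ⊤ (B x)) (B x)).mpr le_rfl
    rwa [𝒬.mul_comm, 𝒬.mul_top] at this
end

section
/- Let X be a stratified Q-cotopological space and irr(X) the set of its irreducible closed sets. For each closed set A define s(A) : irr(X) → Q by s(A)(F) = sub_X(F, A). Then sub_X(A,B) = sub_{irr(X)}(s(A), s(B)) for all closed sets A, B; in particular s is injective on closed sets. -/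
open CIQuantale

namespace CIQuantale

variable {Q : Type*} [CompleteLattice Q] (𝒬 : CIQuantale Q) {X : Type*}

lemma my_mul_le_mul {p p' q q' : Q} (hp : p ≤ p') (hq : q ≤ q') :
    𝒬.mul p q ≤ 𝒬.mul p' q' := by
  have h1 : ∀ a : Q, ∀ b b' : Q, b ≤ b' → 𝒬.mul a b ≤ 𝒬.mul a b' := by
    intro a b b' hb
    have : 𝒬.mul a b' = 𝒬.mul a (sSup {b, b'}) := by
      rw [sSup_pair, sup_eq_right.2 hb]
    rw [this, 𝒬.mul_sSup]
    exact le_iSup₂ (f := fun r (_ : r ∈ ({b, b'} : Set Q)) => 𝒬.mul a r) b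
      (Set.mem_insert _ _)
  calc 𝒬.mul p q ≤ 𝒬.mul p q' := h1 p q q' hq
    _ = 𝒬.mul q' p := 𝒬.mul_comm _ _
    _ ≤ 𝒬.mul q' p' := h1 q' p p' hp
    _ = 𝒬.mul p' q' := 𝒬.mul_comm _ _

lemma my_counit (p r : Q) : 𝒬.mul p (𝒬.imp p r) ≤ r :=
  (𝒬.adj p (𝒬.imp p r) r).2 le_rfl

lemma my_top_le_imp {p r : Q} (h : p ≤ r) : (⊤ : Q) ≤ 𝒬.imp p r :=
  (𝒬.adj p ⊤ r).1 (by rw [𝒬.mul_top]; exact h)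

lemma my_imp_top (r : Q) : 𝒬.imp ⊤ r = r := by
  apply le_antisymm
  · have := 𝒬.my_counit ⊤ r
    rwa [𝒬.mul_comm, 𝒬.mul_top] at this
  · exact (𝒬.adj ⊤ r r).1 (by rw [𝒬.mul_comm, 𝒬.mul_top])

lemma my_sub_self (C : X → Q) : 𝒬.sub C C = ⊤ :=
  le_antisymm le_top (le_iInf fun x => 𝒬.my_top_le_imp le_rfl)

lemma my_mul_sub_sub (A B C : X → Q) :
    𝒬.mul (𝒬.sub A B) (𝒬.sub B C) ≤ 𝒬.sub A C := by
  refine le_iInf fun x => ?_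
  have h1 : 𝒬.mul (𝒬.sub A B) (𝒬.sub B C)
      ≤ 𝒬.mul (𝒬.imp (A x) (B x)) (𝒬.imp (B x) (C x)) :=
    𝒬.my_mul_le_mul (iInf_le _ x) (iInf_le _ x)
  refine le_trans h1 ((𝒬.adj _ _ _).1 ?_)
  rw [← 𝒬.mul_assoc]
  calc 𝒬.mul (𝒬.mul (A x) (𝒬.imp (A x) (B x))) (𝒬.imp (B x) (C x))
      ≤ 𝒬.mul (B x) (𝒬.imp (B x) (C x)) :=
        𝒬.my_mul_le_mul (𝒬.my_counit _ _) le_rfl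
    _ ≤ C x := 𝒬.my_counit _ _

lemma my_cl_pt_apply_self [DecidableEq X] (τ : Set (X → Q)) (x : X) :
    cl τ (pt (Q := Q) x) x = ⊤ := by
  refine le_antisymm le_top ?_
  have h : (pt (Q := Q) x : X → Q) ≤ cl τ (pt x) := le_sInf fun B hB => hB.2
  have := h x
  simpa [pt] using this

lemma my_sub_cl_pt [DecidableEq X] (τ : Set (X → Q)) (hτ : IsCotop τ)
    (hs : 𝒬.IsStratified τ) {C : X → Q} (hC : C ∈ τ) (x : X) :
    𝒬.sub (cl τ (pt x)) C = C x := by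
  apply le_antisymm
  · calc 𝒬.sub (cl τ (pt x)) C ≤ 𝒬.imp (cl τ (pt x) x) (C x) := iInf_le _ x
      _ = C x := by rw [my_cl_pt_apply_self (Q := Q), 𝒬.my_imp_top]
  · refine le_iInf fun y => ?_
    rw [← 𝒬.adj]
    have hD : (fun z => 𝒬.imp (C x) (C z)) ∈ τ := hs (C x) C hC
    have hptD : (pt (Q := Q) x) ≤ fun z => 𝒬.imp (C x) (C z) := by
      intro z
      by_cases hz : z = x
      · subst hz; simpa [pt] using 𝒬.my_top_le_imp (le_refl (C z))
      · simp [pt, hz]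
    have hcl' : cl τ (pt x) ≤ fun z => 𝒬.imp (C x) (C z) :=
      sInf_le ⟨hD, hptD⟩
    have hcl : cl τ (pt x) y ≤ 𝒬.imp (C x) (C y) := hcl' y
    calc 𝒬.mul (cl τ (pt x) y) (C x) ≤ 𝒬.mul (𝒬.imp (C x) (C y)) (C x) :=
          𝒬.my_mul_le_mul hcl le_rfl
      _ = 𝒬.mul (C x) (𝒬.imp (C x) (C y)) := 𝒬.mul_comm _ _
      _ ≤ C y := 𝒬.my_counit _ _

lemma my_irred_cl_pt [DecidableEq X] (τ : Set (X → Q)) (hτ : IsCotop τ)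
    (hs : 𝒬.IsStratified τ) (x : X) : 𝒬.Irred τ (cl τ (pt x)) := by
  refine ⟨hτ.2.2 _ fun B hB => hB.1, ?_, ?_⟩
  · exact le_antisymm le_top (le_trans (my_cl_pt_apply_self (Q := Q) τ x).ge (le_iSup _ x))
  · intro C D hC hD
    rw [𝒬.my_sub_cl_pt τ hτ hs hC, 𝒬.my_sub_cl_pt τ hτ hs hD,
      𝒬.my_sub_cl_pt τ hτ hs (hτ.2.1 C D hC hD)]
    rfl

end CIQuantale


private lemma my_key {Q : Type*} [CompleteLattice Q] (𝒬 : CIQuantale Q) {X : Type*}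
    (τ : Set (X → Q)) (hτ : IsCotop τ) (hs : 𝒬.IsStratified τ)
    (A B : X → Q) (hA : A ∈ τ) (hB : B ∈ τ) :
    𝒬.sub A B =
      𝒬.sub (fun F : {F : X → Q // 𝒬.Irred τ F} => 𝒬.sub F.1 A)
            (fun F : {F : X → Q // 𝒬.Irred τ F} => 𝒬.sub F.1 B) := by
  classical
  apply le_antisymm
  · refine le_iInf fun F => ?_
    exact (𝒬.adj _ _ _).1
      (le_trans (𝒬.my_mul_le_mul le_rfl le_rfl) (𝒬.my_mul_sub_sub F.1 A B))
  · refine le_iInf fun x => ?_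
    have hF : 𝒬.Irred τ (cl τ (pt x)) := 𝒬.my_irred_cl_pt τ hτ hs x
    calc 𝒬.sub (fun F : {F : X → Q // 𝒬.Irred τ F} => 𝒬.sub F.1 A)
            (fun F : {F : X → Q // 𝒬.Irred τ F} => 𝒬.sub F.1 B)
        ≤ 𝒬.imp (𝒬.sub (cl τ (pt x)) A) (𝒬.sub (cl τ (pt x)) B) :=
          iInf_le _ (⟨cl τ (pt x), hF⟩ : {F : X → Q // 𝒬.Irred τ F})
      _ = 𝒬.imp (A x) (B x) := by
          rw [𝒬.my_sub_cl_pt τ hτ hs hA, 𝒬.my_sub_cl_pt τ hτ hs hB]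

theorem stmt11 {Q : Type*} [CompleteLattice Q] (𝒬 : CIQuantale Q) {X : Type*}
    (τ : Set (X → Q)) (hτ : IsCotop τ) (hs : 𝒬.IsStratified τ)
    (A B : X → Q) (hA : A ∈ τ) (hB : B ∈ τ) :
    𝒬.sub A B =
      𝒬.sub (fun F : {F : X → Q // 𝒬.Irred τ F} => 𝒬.sub F.1 A)
            (fun F : {F : X → Q // 𝒬.Irred τ F} => 𝒬.sub F.1 B) ∧
    ((fun F : {F : X → Q // 𝒬.Irred τ F} => 𝒬.sub F.1 A) =
      (fun F : {F : X → Q // 𝒬.Irred τ F} => 𝒬.sub F.1 B) → A = B) := by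
  have h1 := my_key 𝒬 τ hτ hs A B hA hB
  refine ⟨h1, fun h => ?_⟩
  have h2 := my_key 𝒬 τ hτ hs B A hB hA
  have hab : 𝒬.sub A B = ⊤ := by
    rw [h1, h, 𝒬.my_sub_self]
  have hba : 𝒬.sub B A = ⊤ := by
    rw [h2, ← h, 𝒬.my_sub_self]
  funext x
  have pab : ⊤ ≤ 𝒬.imp (A x) (B x) := hab ▸ iInf_le _ x
  have pba : ⊤ ≤ 𝒬.imp (B x) (A x) := hba ▸ iInf_le _ x
  have la : A x ≤ B x := by
    have := (𝒬.adj (A x) ⊤ (B x)).2 pab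
    rwa [𝒬.mul_top] at this
  have lb : B x ≤ A x := by
    have := (𝒬.adj (B x) ⊤ (A x)).2 pba
    rwa [𝒬.mul_top] at this
  exact le_antisymm la lb
end

section
/- Let f : X → Y be a continuous map between stratified Q-cotopological spaces. If F is an irreducible closed set in X, then the closure of the image f→(F) is an irreducible closed set in Y. -/
open CIQuantale


section Aux
variable {Q : Type*} [CompleteLattice Q] (𝒬 : CIQuantale Q)

lemma CIQuantale.aux_mul_mono_right (p : Q) {q q' : Q} (h : q ≤ q') : 𝒬.mul p q ≤ 𝒬.mul p q' := by
  rw [𝒬.adj]; exact h.trans ((𝒬.adj p q' _).mp le_rfl)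

lemma CIQuantale.aux_imp_anti {p p' : Q} (h : p' ≤ p) (r : Q) : 𝒬.imp p r ≤ 𝒬.imp p' r := by
  rw [← 𝒬.adj]
  calc 𝒬.mul p' (𝒬.imp p r) ≤ 𝒬.mul p (𝒬.imp p r) := by
        rw [𝒬.mul_comm p', 𝒬.mul_comm p]; exact 𝒬.aux_mul_mono_right _ h
    _ ≤ r := (𝒬.adj _ _ _).mpr le_rfl

lemma CIQuantale.aux_mul_iSup {ι : Sort*} (p : Q) (a : ι → Q) :
    𝒬.mul p (⨆ i, a i) = ⨆ i, 𝒬.mul p (a i) := by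
  rw [iSup, 𝒬.mul_sSup, iSup_range]

lemma CIQuantale.aux_imp_iSup_left {ι : Sort*} (a : ι → Q) (b : Q) :
    𝒬.imp (⨆ i, a i) b = ⨅ i, 𝒬.imp (a i) b := by
  apply le_antisymm
  · exact le_iInf fun i => 𝒬.aux_imp_anti (le_iSup a i) b
  · rw [← 𝒬.adj, 𝒬.mul_comm, 𝒬.aux_mul_iSup]
    refine iSup_le fun i => ?_
    rw [𝒬.mul_comm, 𝒬.adj]
    exact iInf_le _ i

end Aux

theorem stmt13 {Q : Type*} [CompleteLattice Q] (𝒬 : CIQuantale Q) {X Y : Type*}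
    (τX : Set (X → Q)) (τY : Set (Y → Q))
    (hτX : IsCotop τX) (hτY : IsCotop τY)
    (hsX : 𝒬.IsStratified τX) (hsY : 𝒬.IsStratified τY)
    (f : X → Y) (hf : ∀ A ∈ τY, (fun x => A (f x)) ∈ τX)
    (F : X → Q) (hF : 𝒬.Irred τX F) :
    𝒬.Irred τY (cl τY (fun y => ⨆ x ∈ f ⁻¹' {y}, F x)) := by
  classical
  set G : Y → Q := fun y => ⨆ x ∈ f ⁻¹' {y}, F x with hG
  set C : Y → Q := cl τY G with hC
  have hGC : G ≤ C := le_sInf fun B hB => hB.2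
  have hCτ : C ∈ τY := hτY.2.2 _ fun B hB => hB.1
  have hFG : ∀ x, F x ≤ G (f x) := fun x =>
    le_iSup₂ (f := fun x' (_ : x' ∈ f ⁻¹' {f x}) => F x') x rfl
  -- sub G A = sub F (A ∘ f)
  have key1 : ∀ A : Y → Q, 𝒬.sub G A = 𝒬.sub F (fun x => A (f x)) := by
    intro A
    apply le_antisymm
    · refine le_iInf fun x => ?_
      exact le_trans (iInf_le _ (f x)) (𝒬.aux_imp_anti (hFG x) _)
    · refine le_iInf fun y => ?_
      have : G y = ⨆ x, ⨆ _ : f x = y, F x := rfl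
      rw [this, 𝒬.aux_imp_iSup_left]
      refine le_iInf fun x => ?_
      rw [𝒬.aux_imp_iSup_left]
      refine le_iInf fun h => ?_
      subst h
      exact iInf_le _ x
  -- sub C A = sub G A for A closed
  have key2 : ∀ A ∈ τY, 𝒬.sub C A = 𝒬.sub G A := by
    intro A hA
    apply le_antisymm
    · exact le_iInf fun y => le_trans (iInf_le _ y) (𝒬.aux_imp_anti (hGC y) _)
    · set p := 𝒬.sub G A with hp
      have h1 : ∀ y, G y ≤ 𝒬.imp p (A y) := by
        intro y
        rw [← 𝒬.adj, 𝒬.mul_comm, 𝒬.adj]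
        exact iInf_le _ y
      have hcl : C ≤ fun y => 𝒬.imp p (A y) := sInf_le ⟨hsY p A hA, h1⟩
      refine le_iInf fun y => ?_
      rw [← 𝒬.adj, 𝒬.mul_comm, 𝒬.adj]
      exact hcl y
  refine ⟨hCτ, ?_, ?_⟩
  · apply top_unique
    rw [← hF.2.1]
    refine iSup_le fun x => ?_
    exact le_trans (hFG x) (le_trans (hGC (f x)) (le_iSup _ (f x)))
  · intro A B hA hB
    have hAB : A ⊔ B ∈ τY := hτY.2.1 A B hA hB
    have hfab : (fun x => (A ⊔ B) (f x)) = (fun x => A (f x)) ⊔ (fun x => B (f x)) := rfl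
    rw [key2 _ hAB, key2 _ hA, key2 _ hB, key1, key1, key1, hfab,
      hF.2.2 _ _ (hf A hA) (hf B hB)]
end

section
/- Let Q be a quantale with enough coprimes and X a topological space. The family of upper semicontinuous maps λ : X → Q (those with λ_[p] = {x : λ(x) ≥ p} closed in X for all p ∈ Q) forms a stratified Q-cotopology on X: it contains constants and is closed under binary joins, arbitrary meets, and the operation λ ↦ p → λ. -/
open CIQuantale

theorem stmt16 {Q : Type*} [CompleteLattice Q] (𝒬 : CIQuantale Q)
    (hco : ∀ p : Q, ∃ S : Set Q,
      (∀ a ∈ S, ∀ b c : Q, a ≤ b ⊔ c → a ≤ b ∨ a ≤ c) ∧ p = sSup S)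
    {X : Type*} [TopologicalSpace X] :
    IsCotop {l : X → Q | ∀ p : Q, IsClosed {x | p ≤ l x}} ∧
    𝒬.IsStratified {l : X → Q | ∀ p : Q, IsClosed {x | p ≤ l x}} := by
  constructor
  · refine ⟨?_, ?_, ?_⟩
    · intro p q
      by_cases h : q ≤ p
      · have : {x : X | q ≤ p} = Set.univ := by ext x; simp [h]
        rw [this]; exact isClosed_univ
      · have : {x : X | q ≤ p} = ∅ := by ext x; simp [h]
        rw [this]; exact isClosed_empty
    · intro A B hA hB p
      obtain ⟨S, hS, rfl⟩ := hco p
      have : {x | sSup S ≤ (A ⊔ B) x} = ⋂ a ∈ S, ({x | a ≤ A x} ∪ {x | a ≤ B x}) := by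
        ext x
        simp only [Set.mem_iInter, Set.mem_union, Set.mem_setOf_eq, sSup_le_iff,
          Pi.sup_apply]
        constructor
        · intro h a ha
          exact hS a ha _ _ (h a ha)
        · intro h a ha
          rcases h a ha with h' | h'
          · exact h'.trans le_sup_left
          · exact h'.trans le_sup_right
      rw [this]
      exact isClosed_biInter fun a _ => (hA a).union (hB a)
    · intro S hS p
      have : {x | p ≤ sInf S x} = ⋂ A ∈ S, {x | p ≤ A x} := by
        ext x
        simp only [Set.mem_iInter, Set.mem_setOf_eq, sInf_apply, le_iInf_iff,
          iInf_subtype']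
        exact ⟨fun h A hA => h ⟨A, hA⟩, fun h a => h a.1 a.2⟩
      rw [this]
      exact isClosed_biInter fun A hA => hS hA p
  · intro q A hA p
    have : {x | p ≤ 𝒬.imp q (A x)} = {x | 𝒬.mul q p ≤ A x} := by
      ext x; simp [𝒬.adj]
    rw [this]
    exact hA _
end

section
/- Let Q be a commutative integral quantale satisfying the law of double negation. If τ is a stratified Q-cotopology on X, then ¬(τ) = {¬A : A ∈ τ} is a stratified Q-topology on X: it contains all constants, is closed under binary meets, arbitrary joins, and the operation U ↦ p & U. -/
open CIQuantale


section Helpers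

variable {Q : Type*} [CompleteLattice Q] (𝒬 : CIQuantale Q)

lemma gal (a x : Q) : x ≤ 𝒬.imp a ⊥ ↔ a ≤ 𝒬.imp x ⊥ := by
  rw [← 𝒬.adj, 𝒬.mul_comm, 𝒬.adj]

lemma neg_neg' (hdn : ∀ p : Q, 𝒬.imp (𝒬.imp p ⊥) ⊥ = p) (p : Q) :
    𝒬.imp (𝒬.imp p ⊥) ⊥ = p := hdn p

lemma qneg_sup (a b : Q) :
    𝒬.imp (a ⊔ b) ⊥ = 𝒬.imp a ⊥ ⊓ 𝒬.imp b ⊥ := by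
  apply eq_of_forall_le_iff
  intro x
  rw [gal, sup_le_iff, le_inf_iff, gal 𝒬 x a, gal 𝒬 x b]

lemma neg_iSup {ι : Sort*} (f : ι → Q) :
    𝒬.imp (⨆ i, f i) ⊥ = ⨅ i, 𝒬.imp (f i) ⊥ := by
  apply eq_of_forall_le_iff
  intro x
  simp only [le_iInf_iff, gal, iSup_le_iff]

lemma imp_mul (p q r : Q) :
    𝒬.imp (𝒬.mul p q) r = 𝒬.imp p (𝒬.imp q r) := by
  apply eq_of_forall_le_iff
  intro x
  rw [← 𝒬.adj, ← 𝒬.adj, ← 𝒬.adj]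
  have key : 𝒬.mul (𝒬.mul p q) x = 𝒬.mul q (𝒬.mul p x) := by
    rw [𝒬.mul_comm p q, 𝒬.mul_assoc]
  rw [key]

lemma qmul_neg (hdn : ∀ p : Q, 𝒬.imp (𝒬.imp p ⊥) ⊥ = p) (p a : Q) :
    𝒬.mul p (𝒬.imp a ⊥) = 𝒬.imp (𝒬.imp p a) ⊥ := by
  have h1 : 𝒬.imp (𝒬.mul p (𝒬.imp a ⊥)) ⊥ = 𝒬.imp p a := by
    rw [imp_mul, hdn a]
  rw [← hdn (𝒬.mul p (𝒬.imp a ⊥)), h1]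

end Helpers

theorem stmt17 {Q : Type*} [CompleteLattice Q] (𝒬 : CIQuantale Q)
    (hdn : ∀ p : Q, 𝒬.imp (𝒬.imp p ⊥) ⊥ = p) {X : Type*}
    (τ : Set (X → Q)) (hτ : IsCotop τ) (hs : 𝒬.IsStratified τ) :
    (∀ p : Q, (fun _ => p) ∈ 𝒬.negSet τ) ∧
    (∀ U V : X → Q, U ∈ 𝒬.negSet τ → V ∈ 𝒬.negSet τ → U ⊓ V ∈ 𝒬.negSet τ) ∧
    (∀ S : Set (X → Q), S ⊆ 𝒬.negSet τ → sSup S ∈ 𝒬.negSet τ) ∧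
    (∀ (p : Q) (U : X → Q), U ∈ 𝒬.negSet τ →
      (fun x => 𝒬.mul p (U x)) ∈ 𝒬.negSet τ) := by
  obtain ⟨hc, hj, hm⟩ := hτ
  refine ⟨?_, ?_, ?_, ?_⟩
  · intro p
    exact ⟨fun _ => 𝒬.imp p ⊥, hc _, (by funext x; simp [hdn p])⟩
  · rintro U V ⟨A, hA, rfl⟩ ⟨B, hB, rfl⟩
    refine ⟨A ⊔ B, hj A B hA hB, ?_⟩
    funext x
    simp only [Pi.inf_apply, Pi.sup_apply]
    rw [qneg_sup]
  · intro S hS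
    set T : Set (X → Q) := {A | A ∈ τ ∧ (fun x => 𝒬.imp (A x) ⊥) ∈ S} with hT
    refine ⟨sInf T, hm T (fun A hA => hA.1), ?_⟩
    funext x
    have h1 : sSup S x = ⨆ U : S, (U : X → Q) x := by
      rw [sSup_apply]
    rw [h1]
    have h2 : sInf T x = ⨅ A : T, (A : X → Q) x := by
      rw [sInf_apply]
    rw [h2]
    have h3 : (⨅ A : T, (A : X → Q) x) = 𝒬.imp (⨆ A : T, 𝒬.imp ((A : X → Q) x) ⊥) ⊥ := by
      rw [neg_iSup]
      exact iInf_congr fun A => (hdn _).symm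
    rw [h3, hdn]
    apply le_antisymm
    · apply iSup_le
      intro U
      obtain ⟨A, hA, hAU⟩ := hS U.2
      have hAT : A ∈ T := ⟨hA, by rw [← hAU]; exact U.2⟩
      have : (U : X → Q) x = 𝒬.imp (A x) ⊥ := by rw [hAU]
      rw [this]
      exact le_iSup (fun A : T => 𝒬.imp ((A : X → Q) x) ⊥) ⟨A, hAT⟩
    · apply iSup_le
      intro A
      exact le_iSup (fun U : S => (U : X → Q) x) ⟨fun x => 𝒬.imp ((A : X → Q) x) ⊥, A.2.2⟩
  · rintro p U ⟨A, hA, rfl⟩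
    refine ⟨fun x => 𝒬.imp p (A x), hs p A hA, ?_⟩
    funext x
    exact qmul_neg 𝒬 hdn p (A x)
end

section
/- Let Q be a commutative integral quantale satisfying the law of double negation, (X,τ) a stratified Q-cotopological space, and F an irreducible closed set. Then the map f_F : ¬(τ) → Q, f_F(U) = ⋁_{x∈X} F(x) & U(x), satisfies: f_F(p_X) = p, f_F(U ∧ V) = f_F(U) ∧ f_F(V), f_F(⋁_i U_i) = ⋁_i f_F(U_i), and f_F(p & U) = p & f_F(U). -/
namespace CIQuantale

variable {Q : Type*} [CompleteLattice Q] (𝒬 : CIQuantale Q) {X : Type*}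

lemma mul_iSup' {ι : Sort*} (p : Q) (f : ι → Q) :
    𝒬.mul p (⨆ i, f i) = ⨆ i, 𝒬.mul p (f i) := by
  rw [show (⨆ i, f i) = sSup (Set.range f) from rfl, 𝒬.mul_sSup, iSup_range]

lemma imp_iSup' {ι : Sort*} (f : ι → Q) (c : Q) :
    𝒬.imp (⨆ i, f i) c = ⨅ i, 𝒬.imp (f i) c := by
  apply eq_of_forall_le_iff
  intro r
  rw [← 𝒬.adj, 𝒬.mul_comm, 𝒬.mul_iSup', iSup_le_iff, le_iInf_iff]
  exact forall_congr' fun i => by rw [𝒬.mul_comm, 𝒬.adj]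

lemma imp_sup' (a b c : Q) :
    𝒬.imp (a ⊔ b) c = 𝒬.imp a c ⊓ 𝒬.imp b c := by
  have h : (a ⊔ b) = ⨆ i : Bool, (if i then a else b) := by
    simp [iSup_bool_eq, sup_comm]
  rw [h, 𝒬.imp_iSup', iInf_bool_eq]
  simp

lemma imp_mul' (p q c : Q) :
    𝒬.imp p (𝒬.imp q c) = 𝒬.imp (𝒬.mul q p) c := by
  apply eq_of_forall_le_iff
  intro r
  rw [← 𝒬.adj, ← 𝒬.adj, ← 𝒬.adj, 𝒬.mul_assoc]

lemma sub_neg' (F U : X → Q) :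
    𝒬.sub F (fun x => 𝒬.imp (U x) ⊥) = 𝒬.imp (⨆ x, 𝒬.mul (F x) (U x)) ⊥ := by
  rw [𝒬.imp_iSup']
  unfold sub
  exact iInf_congr fun x => by rw [𝒬.imp_mul', 𝒬.mul_comm]

lemma f_neg' (hdn : ∀ p : Q, 𝒬.imp (𝒬.imp p ⊥) ⊥ = p) (F A : X → Q) :
    (⨆ x, 𝒬.mul (F x) (𝒬.imp (A x) ⊥)) = 𝒬.imp (𝒬.sub F A) ⊥ := by
  have h := 𝒬.sub_neg' F (fun x => 𝒬.imp (A x) ⊥)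
  simp only [hdn] at h
  rw [h, hdn]

end CIQuantale

open CIQuantale

theorem stmt18 {Q : Type*} [CompleteLattice Q] (𝒬 : CIQuantale Q)
    (hdn : ∀ p : Q, 𝒬.imp (𝒬.imp p ⊥) ⊥ = p) {X : Type*}
    (τ : Set (X → Q)) (hτ : IsCotop τ) (hs : 𝒬.IsStratified τ)
    (F : X → Q) (hF : 𝒬.Irred τ F) :
    (∀ p : Q, (⨆ x, 𝒬.mul (F x) p) = p) ∧
    (∀ U V : X → Q, U ∈ 𝒬.negSet τ → V ∈ 𝒬.negSet τ →
      (⨆ x, 𝒬.mul (F x) ((U ⊓ V) x)) =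
        (⨆ x, 𝒬.mul (F x) (U x)) ⊓ (⨆ x, 𝒬.mul (F x) (V x))) ∧
    (∀ (J : Type*) (U : J → X → Q), (∀ j, U j ∈ 𝒬.negSet τ) →
      (⨆ x, 𝒬.mul (F x) (⨆ j, U j x)) = ⨆ j, ⨆ x, 𝒬.mul (F x) (U j x)) ∧
    (∀ (p : Q) (U : X → Q), U ∈ 𝒬.negSet τ →
      (⨆ x, 𝒬.mul (F x) (𝒬.mul p (U x))) =
        𝒬.mul p (⨆ x, 𝒬.mul (F x) (U x))) := by
  obtain ⟨hFτ, hFtop, hirr⟩ := hF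
  refine ⟨?_, ?_, ?_, ?_⟩
  · intro p
    calc (⨆ x, 𝒬.mul (F x) p) = ⨆ x, 𝒬.mul p (F x) := by
          exact iSup_congr fun x => 𝒬.mul_comm _ _
      _ = 𝒬.mul p (⨆ x, F x) := (𝒬.mul_iSup' p F).symm
      _ = p := by rw [hFtop, 𝒬.mul_top]
  · rintro U V ⟨A, hA, rfl⟩ ⟨B, hB, rfl⟩
    have hUV : ∀ x, (((fun x => 𝒬.imp (A x) ⊥) ⊓ (fun x => 𝒬.imp (B x) ⊥)) x)
        = 𝒬.imp ((A ⊔ B) x) ⊥ := fun x => (𝒬.imp_sup' (A x) (B x) ⊥).symm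
    calc (⨆ x, 𝒬.mul (F x) (((fun x => 𝒬.imp (A x) ⊥) ⊓ (fun x => 𝒬.imp (B x) ⊥)) x))
        = ⨆ x, 𝒬.mul (F x) (𝒬.imp ((A ⊔ B) x) ⊥) := iSup_congr fun x => by rw [hUV]
      _ = 𝒬.imp (𝒬.sub F (A ⊔ B)) ⊥ := 𝒬.f_neg' hdn F (A ⊔ B)
      _ = 𝒬.imp (𝒬.sub F A ⊔ 𝒬.sub F B) ⊥ := by rw [hirr A B hA hB]
      _ = 𝒬.imp (𝒬.sub F A) ⊥ ⊓ 𝒬.imp (𝒬.sub F B) ⊥ := 𝒬.imp_sup' _ _ _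
      _ = _ := by rw [𝒬.f_neg' hdn F A, 𝒬.f_neg' hdn F B]
  · intro J U _
    calc (⨆ x, 𝒬.mul (F x) (⨆ j, U j x))
        = ⨆ x, ⨆ j, 𝒬.mul (F x) (U j x) :=
          iSup_congr fun x => 𝒬.mul_iSup' (F x) (fun j => U j x)
      _ = ⨆ j, ⨆ x, 𝒬.mul (F x) (U j x) := iSup_comm
  · intro p U _
    calc (⨆ x, 𝒬.mul (F x) (𝒬.mul p (U x)))
        = ⨆ x, 𝒬.mul p (𝒬.mul (F x) (U x)) := iSup_congr fun x => by
          rw [← 𝒬.mul_assoc, 𝒬.mul_comm (F x) p, 𝒬.mul_assoc]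
      _ = 𝒬.mul p (⨆ x, 𝒬.mul (F x) (U x)) :=
          (𝒬.mul_iSup' p fun x => 𝒬.mul (F x) (U x)).symm
end
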